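/- One full Sinkhorn-EM iteration does not increase the entropic optimal transport loss: if w* is a responsibility function satisfying the marginal constraints ∫ w*_k dQ = α_k that attains the infimum defining 𝓛(θ), and θ' ∈ (ℝ^d)^K maximizes the M-step objective θ'' ↦ ∫ Σ_k w*_k(y) log(α_k q_{θ''_k}(y)) dQ(y) over (ℝ^d)^K, then 𝓛(θ') ≤ 𝓛(θ). -/
import Mathlib


open MeasureTheory

/-- Gaussian density on `ℝ^d` with mean `μ` and covariance `σ² I_d`. -/
noncomputable def gaussDen (d : ℕ) (σ : ℝ) (μ y : EuclideanSpace ℝ (Fin d)) : ℝ :=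
  (2 * Real.pi * σ ^ 2) ^ (-(d : ℝ) / 2) * Real.exp (-‖y - μ‖ ^ 2 / (2 * σ ^ 2))

/-- A responsibility function: a measurable map into `[0,1]^K` whose coordinates sum to one. -/
def IsResp (K d : ℕ) (w : EuclideanSpace ℝ (Fin d) → Fin K → ℝ) : Prop :=
  (∀ k, Measurable fun y => w y k) ∧ (∀ y k, w y k ∈ Set.Icc (0 : ℝ) 1) ∧
    (∀ y, ∑ k, w y k = 1)

/-- The free energy `E_Q(w, θ)`. -/
noncomputable def freeEnergy (K d : ℕ) (σ : ℝ) (α : Fin K → ℝ)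
    (Q : Measure (EuclideanSpace ℝ (Fin d)))
    (w : EuclideanSpace ℝ (Fin d) → Fin K → ℝ)
    (θ : Fin K → EuclideanSpace ℝ (Fin d)) : ℝ :=
  ∫ y, (∑ k, w y k * (Real.log (w y k) - Real.log (α k * gaussDen d σ (θ k) y))) ∂Q

/-- The negative population log-likelihood `ℓ(θ)`. -/
noncomputable def negLogLik (K d : ℕ) (σ : ℝ) (α : Fin K → ℝ)
    (Q : Measure (EuclideanSpace ℝ (Fin d)))
    (θ : Fin K → EuclideanSpace ℝ (Fin d)) : ℝ :=
  -∫ y, Real.log (∑ k, α k * gaussDen d σ (θ k) y) ∂Q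

/-- The entropic optimal transport loss `𝓛(θ)`: infimum of the free energy over
responsibility functions satisfying the marginal constraints. -/
noncomputable def entLoss (K d : ℕ) (σ : ℝ) (α : Fin K → ℝ)
    (Q : Measure (EuclideanSpace ℝ (Fin d)))
    (θ : Fin K → EuclideanSpace ℝ (Fin d)) : ℝ :=
  sInf {r : ℝ | ∃ w, IsResp K d w ∧ (∀ k, ∫ y, w y k ∂Q = α k) ∧
    freeEnergy K d σ α Q w θ = r}

/- ######## Auxiliary lemmas ######## -/

lemma gaussDen_pos {d : ℕ} {σ : ℝ} (hσ : 0 < σ) (μ y : EuclideanSpace ℝ (Fin d)) :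
    0 < gaussDen d σ μ y := by
  unfold gaussDen
  have h : (0:ℝ) < 2 * Real.pi * σ ^ 2 := by positivity
  positivity

lemma log_mul_gaussDen {d : ℕ} {σ : ℝ} (hσ : 0 < σ) {a : ℝ} (ha : 0 < a)
    (μ y : EuclideanSpace ℝ (Fin d)) :
    Real.log (a * gaussDen d σ μ y) =
      Real.log a + (-(d:ℝ)/2) * Real.log (2*Real.pi*σ^2) + (-‖y-μ‖^2 / (2*σ^2)) := by
  have hc : (0:ℝ) < 2*Real.pi*σ^2 := by positivity
  unfold gaussDen
  rw [Real.log_mul (ne_of_gt ha) (by positivity),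
    Real.log_mul (by positivity) (Real.exp_ne_zero _),
    Real.log_rpow hc, Real.log_exp]
  ring

lemma xlogx_ge {x : ℝ} (hx0 : 0 ≤ x) : x - 1 ≤ x * Real.log x := by
  rcases eq_or_lt_of_le hx0 with h | h
  · simp [← h]
  · have h1 := Real.log_le_sub_one_of_pos (show (0:ℝ) < x⁻¹ by positivity)
    rw [Real.log_inv] at h1
    have h2 : 1 - x⁻¹ ≤ Real.log x := by linarith
    have h3 := mul_le_mul_of_nonneg_left h2 hx0
    have hxi : x * x⁻¹ = 1 := mul_inv_cancel₀ h.ne'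
    nlinarith

lemma xlogx_le {x : ℝ} (hx0 : 0 ≤ x) (hx1 : x ≤ 1) : x * Real.log x ≤ 0 := by
  rcases eq_or_lt_of_le hx0 with h | h
  · simp [← h]
  · exact mul_nonpos_of_nonneg_of_nonpos hx0 (Real.log_nonpos hx0 hx1)

lemma gaussDen_continuous {d : ℕ} {σ : ℝ} (μ : EuclideanSpace ℝ (Fin d)) :
    Continuous (gaussDen d σ μ) := by
  unfold gaussDen; fun_prop

/-- Integrability of the "model" part of the free energy. -/
lemma integrable_wlogg {K d : ℕ} {σ : ℝ} (hσ : 0 < σ) {α : Fin K → ℝ}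
    (hα : ∀ k, 0 < α k) {Q : Measure (EuclideanSpace ℝ (Fin d))} [IsProbabilityMeasure Q]
    (hQ : Integrable (fun y => ‖y‖ ^ 2) Q)
    (θ : Fin K → EuclideanSpace ℝ (Fin d))
    {w : EuclideanSpace ℝ (Fin d) → Fin K → ℝ} (hw : IsResp K d w) :
    Integrable (fun y => ∑ k, w y k * Real.log (α k * gaussDen d σ (θ k) y)) Q := by
  apply integrable_finset_sum
  intro k _
  have hL : Integrable (fun y => Real.log (α k * gaussDen d σ (θ k) y)) Q := by
    have heq : (fun y => Real.log (α k * gaussDen d σ (θ k) y))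
        = fun y => (Real.log (α k) + (-(d:ℝ)/2) * Real.log (2*Real.pi*σ^2))
            + (-(2*σ^2)⁻¹) * ‖y - θ k‖^2 := by
      funext y
      rw [log_mul_gaussDen hσ (hα k)]
      ring
    rw [heq]
    have hsq : Integrable (fun y => ‖y - θ k‖^2) Q := by
      have hg : Integrable (fun y => 2*‖y‖^2 + 2*‖θ k‖^2) Q :=
        (hQ.const_mul 2).add (integrable_const _)
      refine hg.mono' (Continuous.aestronglyMeasurable (by fun_prop)) ?_
      filter_upwards with y
      have h1 : ‖y - θ k‖ ≤ ‖y‖ + ‖θ k‖ := norm_sub_le _ _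
      have h2 : ‖(‖y - θ k‖^2)‖ = ‖y - θ k‖^2 := by
        rw [Real.norm_eq_abs, abs_of_nonneg (by positivity)]
      rw [h2]
      nlinarith [pow_le_pow_left₀ (norm_nonneg (y - θ k)) h1 2, sq_nonneg (‖y‖ - ‖θ k‖)]
    exact (integrable_const _).add (hsq.const_mul _)
  have hmeas : AEStronglyMeasurable
      (fun y => w y k * Real.log (α k * gaussDen d σ (θ k) y)) Q :=
    ((hw.1 k).mul (Real.measurable_log.comp
      (measurable_const.mul (gaussDen_continuous (θ k)).measurable))).aestronglyMeasurable
  refine hL.abs.mono' hmeas ?_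
  filter_upwards with y
  rw [Real.norm_eq_abs, abs_mul]
  have h0 := (hw.2.1 y k).1
  have h1 := (hw.2.1 y k).2
  calc |w y k| * |Real.log (α k * gaussDen d σ (θ k) y)|
      ≤ 1 * |Real.log (α k * gaussDen d σ (θ k) y)| := by
        apply mul_le_mul_of_nonneg_right _ (abs_nonneg _)
        rw [abs_of_nonneg h0]; exact h1
    _ = |Real.log (α k * gaussDen d σ (θ k) y)| := one_mul _

/-- Integrability of the entropy part of the free energy. -/
lemma integrable_entropy {K d : ℕ} {Q : Measure (EuclideanSpace ℝ (Fin d))}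
    [IsProbabilityMeasure Q]
    {w : EuclideanSpace ℝ (Fin d) → Fin K → ℝ} (hw : IsResp K d w) :
    Integrable (fun y => ∑ k, w y k * Real.log (w y k)) Q := by
  have hmeas : AEStronglyMeasurable (fun y => ∑ k, w y k * Real.log (w y k)) Q := by
    refine (Finset.measurable_sum _ fun k _ => ?_).aestronglyMeasurable
    exact (hw.1 k).mul (Real.measurable_log.comp (hw.1 k))
  refine (integrable_const (K : ℝ)).mono' hmeas ?_
  filter_upwards with y
  rw [Real.norm_eq_abs]
  have hterm : ∀ k, |w y k * Real.log (w y k)| ≤ 1 := by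
    intro k
    have h0 := (hw.2.1 y k).1
    have h1 := (hw.2.1 y k).2
    rw [abs_le]
    constructor
    · linarith [xlogx_ge h0]
    · linarith [xlogx_le h0 h1]
  calc |∑ k, w y k * Real.log (w y k)| ≤ ∑ k, |w y k * Real.log (w y k)| :=
        Finset.abs_sum_le_sum_abs _ _
    _ ≤ ∑ _k : Fin K, (1:ℝ) := Finset.sum_le_sum fun k _ => hterm k
    _ = (K : ℝ) := by simp

/-- Splitting the free energy into entropy minus model terms. -/
lemma freeEnergy_split {K d : ℕ} {σ : ℝ} (hσ : 0 < σ) {α : Fin K → ℝ}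
    (hα : ∀ k, 0 < α k) {Q : Measure (EuclideanSpace ℝ (Fin d))} [IsProbabilityMeasure Q]
    (hQ : Integrable (fun y => ‖y‖ ^ 2) Q)
    (θ : Fin K → EuclideanSpace ℝ (Fin d))
    {w : EuclideanSpace ℝ (Fin d) → Fin K → ℝ} (hw : IsResp K d w) :
    freeEnergy K d σ α Q w θ = (∫ y, ∑ k, w y k * Real.log (w y k) ∂Q)
      - ∫ y, ∑ k, w y k * Real.log (α k * gaussDen d σ (θ k) y) ∂Q := by
  unfold freeEnergy
  have heq : (fun y => ∑ k, w y k * (Real.log (w y k) - Real.log (α k * gaussDen d σ (θ k) y)))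
      = fun y => (∑ k, w y k * Real.log (w y k))
          - ∑ k, w y k * Real.log (α k * gaussDen d σ (θ k) y) := by
    funext y
    rw [← Finset.sum_sub_distrib]
    congr 1; funext k; ring
  rw [heq, integral_sub (integrable_entropy hw) (integrable_wlogg hσ hα hQ θ hw)]

/-- one full Sinkhorn-EM iteration (optimal E-step responsibilities
followed by an M-step maximization) does not increase the entropic OT loss. -/
theorem sinkhornEM_step_decreases
    (K d : ℕ) (hK : 1 ≤ K) (hd : 1 ≤ d) (σ : ℝ) (hσ : 0 < σ)
    (α : Fin K → ℝ) (hα : ∀ k, α k ∈ Set.Ioo (0 : ℝ) 1) (hαsum : ∑ k, α k = 1)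
    (Q : Measure (EuclideanSpace ℝ (Fin d))) [IsProbabilityMeasure Q]
    (hQ : Integrable (fun y => ‖y‖ ^ 2) Q)
    (θ θ' : Fin K → EuclideanSpace ℝ (Fin d))
    (w : EuclideanSpace ℝ (Fin d) → Fin K → ℝ)
    (hw : IsResp K d w)
    (hmarg : ∀ k, ∫ y, w y k ∂Q = α k)
    (hattain : freeEnergy K d σ α Q w θ = entLoss K d σ α Q θ)
    (hMstep : ∀ θ'' : Fin K → EuclideanSpace ℝ (Fin d),
      ∫ y, (∑ k, w y k * Real.log (α k * gaussDen d σ (θ'' k) y)) ∂Q ≤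
        ∫ y, (∑ k, w y k * Real.log (α k * gaussDen d σ (θ' k) y)) ∂Q) :
    entLoss K d σ α Q θ' ≤ entLoss K d σ α Q θ := by
  have hαpos : ∀ k, 0 < α k := fun k => (hα k).1
  set C : ℝ := (-(d:ℝ)/2) * Real.log (2*Real.pi*σ^2) with hC
  -- every feasible free energy at θ' is bounded below
  have hbound : ∀ w' : EuclideanSpace ℝ (Fin d) → Fin K → ℝ, IsResp K d w' →
      min (1 - K - C) 0 ≤ freeEnergy K d σ α Q w' θ' := by
    intro w' hw'
    have hpt : ∀ y, (1 - K - C : ℝ) ≤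
        ∑ k, w' y k * (Real.log (w' y k) - Real.log (α k * gaussDen d σ (θ' k) y)) := by
      intro y
      have hterm : ∀ k, (w' y k - 1) - w' y k * C ≤
          w' y k * (Real.log (w' y k) - Real.log (α k * gaussDen d σ (θ' k) y)) := by
        intro k
        have h0 := (hw'.2.1 y k).1
        have hlogle : Real.log (α k * gaussDen d σ (θ' k) y) ≤ C := by
          rw [log_mul_gaussDen hσ (hαpos k)]
          have hla : Real.log (α k) ≤ 0 := Real.log_nonpos (hαpos k).le (hα k).2.le
          have hneg : -‖y - θ' k‖^2 / (2*σ^2) ≤ 0 :=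
            div_nonpos_of_nonpos_of_nonneg (neg_nonpos.mpr (by positivity)) (by positivity)
          linarith
        have h1 : w' y k * Real.log (α k * gaussDen d σ (θ' k) y) ≤ w' y k * C :=
          mul_le_mul_of_nonneg_left hlogle h0
        have h2 := xlogx_ge h0
        have : w' y k * (Real.log (w' y k) - Real.log (α k * gaussDen d σ (θ' k) y))
            = w' y k * Real.log (w' y k) - w' y k * Real.log (α k * gaussDen d σ (θ' k) y) := by
          ring
        rw [this]
        linarith
      have hsum : ∑ k, ((w' y k - 1) - w' y k * C) = 1 - K - C := by
        rw [Finset.sum_sub_distrib, Finset.sum_sub_distrib, ← Finset.sum_mul, hw'.2.2 y]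
        simp
      calc (1 - K - C : ℝ) = ∑ k, ((w' y k - 1) - w' y k * C) := hsum.symm
        _ ≤ _ := Finset.sum_le_sum fun k _ => hterm k
    unfold freeEnergy
    by_cases hi : Integrable (fun y =>
        ∑ k, w' y k * (Real.log (w' y k) - Real.log (α k * gaussDen d σ (θ' k) y))) Q
    · refine le_trans (min_le_left _ _) ?_
      have := integral_mono (integrable_const (1 - K - C : ℝ)) hi (fun y => hpt y)
      simpa using this
    · rw [integral_undef hi]
      exact min_le_right _ _
  -- the set defining entLoss at θ' is bounded below
  have hbdd : BddBelow {r : ℝ | ∃ w'', IsResp K d w'' ∧ (∀ k, ∫ y, w'' y k ∂Q = α k) ∧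
      freeEnergy K d σ α Q w'' θ' = r} := by
    refine ⟨min (1 - K - C) 0, ?_⟩
    rintro r ⟨w'', hw'', _, rfl⟩
    exact hbound w'' hw''
  have h1 : entLoss K d σ α Q θ' ≤ freeEnergy K d σ α Q w θ' :=
    csInf_le hbdd ⟨w, hw, hmarg, rfl⟩
  have h2 : freeEnergy K d σ α Q w θ' ≤ freeEnergy K d σ α Q w θ := by
    rw [freeEnergy_split hσ hαpos hQ θ' hw, freeEnergy_split hσ hαpos hQ θ hw]
    have := hMstep θ
    linarith
  linarith [hattain]
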